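/- arXiv:2004.01654 — 2 statements merged into one kernel-verified Lean document; each statement's English description precedes it below -/
import Mathlib

section
/- Let G be a graph on n vertices, let k be a nonnegative real, and let d be an integer with 2 ≤ d ≤ n and n ≤ 2(d−1). Suppose t : E(G) → ℝ≥0 is a weight function such that for every vertex subset S with |S| = n−d+1, the total weight of edges with one endpoint in S and the other outside S is at least k. Then the total weight ∑_{e ∈ E(G)} t(e) ≥ k·n·(n−1) / (2·(n−d+1)·(d−1)). -/
open scoped Classical

open Finset

/-!
Sum the cut condition over all `C(n, m)` vertex sets `S` of size `m = n - d + 1`. An edge `uv`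
crosses exactly the sets containing one endpoint but not the other, `2 C(n - 2, m - 1)` of them,
so the total is `2 C(n - 2, m - 1) ∑ t ≥ C(n, m) k`, and
`C(n, m) / C(n - 2, m - 1) = n (n - 1) / (m (n - m))` with `n - m = d - 1`.
-/

def Sym2.Crosses {V : Type*} (S : Finset V) (e : Sym2 V) : Prop :=
  ∃ u ∈ S, ∃ v, v ∉ S ∧ e = s(u, v)

namespace Sym2

variable {V : Type*}

theorem crosses_mk_iff {S : Finset V} {u v : V} :
    Crosses S s(u, v) ↔ u ∈ S ∧ v ∉ S ∨ v ∈ S ∧ u ∉ S := by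
  constructor
  · rintro ⟨a, ha, b, hb, hab⟩
    rcases Sym2.eq_iff.1 hab with ⟨rfl, rfl⟩ | ⟨rfl, rfl⟩
    exacts [.inl ⟨ha, hb⟩, .inr ⟨ha, hb⟩]
  · rintro (⟨hu, hv⟩ | ⟨hv, hu⟩)
    exacts [⟨u, hu, v, hv, rfl⟩, ⟨v, hv, u, hu, Sym2.eq_swap⟩]

end Sym2

open Sym2

variable {V : Type*} [Fintype V]

theorem card_powersetCard_filter_mem_notMem {u v : V} (huv : u ≠ v) (m : ℕ) :
    #{S ∈ powersetCard (m + 1) (univ : Finset V) | u ∈ S ∧ v ∉ S} =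
      (Fintype.card V - 2).choose m := by
  have hcard : #((univ.erase u).erase v) = Fintype.card V - 2 := by
    rw [card_erase_of_mem (by simp [huv.symm]), card_erase_of_mem (mem_univ u), card_univ,
      Nat.sub_sub]
  rw [← hcard, ← card_powersetCard]
  refine card_nbij' (·.erase u) (insert u) ?_ ?_ ?_ ?_
  · intro S hS
    simp only [coe_filter, Set.mem_ofPred_eq, mem_powersetCard] at hS
    obtain ⟨⟨-, hS⟩, huS, hvS⟩ := hS
    simp only [mem_coe, mem_powersetCard, card_erase_of_mem huS, hS]
    refine ⟨fun x hx => ?_, rfl⟩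
    simp only [mem_erase] at hx ⊢
    exact ⟨fun hxv => hvS (hxv ▸ hx.2), hx.1, mem_univ x⟩
  · intro T hT
    simp only [mem_coe, mem_powersetCard, subset_iff, mem_erase] at hT
    have huT : u ∉ T := fun h => (hT.1 h).2.1 rfl
    simp only [coe_filter, Set.mem_ofPred_eq, mem_powersetCard, card_insert_of_notMem huT, hT.2,
      mem_insert_self, mem_insert, not_or]
    exact ⟨⟨subset_univ _, trivial⟩, trivial, huv.symm, fun h => (hT.1 h).1 rfl⟩
  · intro S hS
    exact insert_erase (mem_filter.1 hS).2.1
  · intro T hT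
    simp only [mem_coe, mem_powersetCard, subset_iff, mem_erase] at hT
    exact erase_insert fun h => (hT.1 h).2.1 rfl

theorem card_powersetCard_filter_crosses {u v : V} (huv : u ≠ v) (m : ℕ) :
    #{S ∈ powersetCard (m + 1) (univ : Finset V) | Crosses S s(u, v)} =
      2 * (Fintype.card V - 2).choose m := by
  simp only [crosses_mk_iff, filter_or]
  rw [card_union_of_disjoint, card_powersetCard_filter_mem_notMem huv,
    card_powersetCard_filter_mem_notMem huv.symm, two_mul]
  exact disjoint_filter.2 fun S _ h₁ h₂ => h₁.2 h₂.1

theorem sum_powersetCard_sum_crossing_edges (G : SimpleGraph V) (t : Sym2 V → ℝ) (m : ℕ) :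
    ∑ S ∈ powersetCard (m + 1) univ, ∑ e ∈ G.edgeFinset.filter (Crosses S), t e =
      2 * (Fintype.card V - 2).choose m * ∑ e ∈ G.edgeFinset, t e := by
  simp_rw [sum_filter]
  rw [sum_comm, mul_sum]
  refine sum_congr rfl fun e he => ?_
  induction e using Sym2.ind with
  | h u v =>
    have huv : u ≠ v := G.ne_of_adj (SimpleGraph.mem_edgeFinset.1 he)
    rw [← sum_filter, sum_const, card_powersetCard_filter_crosses huv, nsmul_eq_mul]
    push_cast
    ring

theorem succ_mul_choose_mul_eq (n m : ℕ) :
    (n + 2) * (n + 1) * n.choose m = (m + 1) * (n + 1 - m) * (n + 2).choose (m + 1) := by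
  calc (n + 2) * (n + 1) * n.choose m = (n + 2) * (n + 1).choose m * (n + 1 - m) := by
        rw [mul_assoc, mul_comm (n + 1), Nat.choose_mul_succ_eq, mul_assoc]
    _ = (m + 1) * (n + 1 - m) * (n + 2).choose (m + 1) := by
        rw [Nat.add_one_mul_choose_eq]
        ring

theorem choose_mul_le_two_mul_choose_mul_sum (G : SimpleGraph V) (t : Sym2 V → ℝ) (k : ℝ)
    (m : ℕ) (hcut : ∀ S : Finset V, #S = m + 1 → k ≤ ∑ e ∈ G.edgeFinset.filter (Crosses S), t e) :
    (Fintype.card V).choose (m + 1) * k ≤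
      2 * (Fintype.card V - 2).choose m * ∑ e ∈ G.edgeFinset, t e := by
  calc ((Fintype.card V).choose (m + 1) : ℝ) * k = ∑ _S ∈ powersetCard (m + 1) univ, k := by
        rw [sum_const, card_powersetCard, card_univ, nsmul_eq_mul]
    _ ≤ ∑ S ∈ powersetCard (m + 1) univ, ∑ e ∈ G.edgeFinset.filter (Crosses S), t e :=
        sum_le_sum fun S hS => hcut S (mem_powersetCard.1 hS).2
    _ = _ := sum_powersetCard_sum_crossing_edges G t m

theorem stmt_11_general {n d : ℕ} (hd2 : 2 ≤ d) (hdn : d ≤ n)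
    (k : ℝ) (G : SimpleGraph (Fin n))
    (t : Sym2 (Fin n) → ℝ)
    (hcut : ∀ S : Finset (Fin n), S.card = n - d + 1 →
      k ≤ ∑ e ∈ G.edgeFinset.filter
        (fun e => ∃ u ∈ S, ∃ v, v ∉ S ∧ e = s(u, v)), t e) :
    k * n * (n - 1) / (2 * ((n - d + 1 : ℕ) : ℝ) * ((d - 1 : ℕ) : ℝ)) ≤
      ∑ e ∈ G.edgeFinset, t e := by
  obtain ⟨c, rfl⟩ := Nat.exists_eq_add_of_le' hd2
  obtain ⟨j, rfl⟩ := Nat.exists_eq_add_of_le hdn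
  have hcount := choose_mul_le_two_mul_choose_mul_sum G t k j fun S hS => by
    -- the two filters differ only in their (classical) decidability instances
    convert hcut S (by omega) using 4; rfl
  have hchoose := succ_mul_choose_mul_eq (c + j) j
  have hpos : (0 : ℝ) < (c + j).choose j := by exact_mod_cast Nat.choose_pos (by omega)
  simp only [Fintype.card_fin, show c + 2 + j - 2 = c + j by omega] at hcount
  simp only [show c + 2 + j - (c + 2) + 1 = j + 1 by omega, show c + 2 - 1 = c + 1 by omega,
    show c + j + 1 - j = c + 1 by omega, show c + j + 2 = c + 2 + j by omega] at hchoose ⊢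
  have hchooseR : ((c + 2 + j : ℕ) : ℝ) * (c + j + 1) * (c + j).choose j =
      (j + 1) * (c + 1) * (c + 2 + j).choose (j + 1) := by exact_mod_cast hchoose
  rw [div_le_iff₀ (by positivity)]
  refine le_of_mul_le_mul_left ?_ hpos
  push_cast at hcount hchooseR ⊢
  calc ((c + j).choose j : ℝ) * (k * (c + 2 + j) * (c + 2 + j - 1))
      = (j + 1) * (c + 1) * ((c + 2 + j).choose (j + 1) * k) := by
        linear_combination k * hchooseR
    _ ≤ (j + 1) * (c + 1) * (2 * (c + j).choose j * ∑ e ∈ G.edgeFinset, t e) := by gcongr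
    _ = _ := by ring

theorem stmt_11 {n d : ℕ} (hd2 : 2 ≤ d) (hdn : d ≤ n) (hnd : n ≤ 2 * (d - 1))
    (k : ℝ) (hk : 0 ≤ k) (G : SimpleGraph (Fin n))
    (t : Sym2 (Fin n) → ℝ) (ht : ∀ e, 0 ≤ t e)
    (hcut : ∀ S : Finset (Fin n), S.card = n - d + 1 →
      k ≤ ∑ e ∈ G.edgeFinset.filter
        (fun e => ∃ u ∈ S, ∃ v, v ∉ S ∧ e = s(u, v)), t e) :
    k * n * (n - 1) / (2 * ((n - d + 1 : ℕ) : ℝ) * ((d - 1 : ℕ) : ℝ)) ≤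
      ∑ e ∈ G.edgeFinset, t e :=
  stmt_11_general hd2 hdn k G t hcut
end

section
/- For every ε > 0 and all sufficiently large N, there exists a subset M ⊆ {1, …, N} free of nontrivial 3-term arithmetic progressions with |M| ≥ N^(1−ε). -/
/-!
Behrend's construction gives `rothNumberNat N ≥ N * exp (-4 * √(log N))`
(`Behrend.roth_lower_bound`). Once `log N ≥ (4 / ε) ^ 2` we have `4 * √(log N) ≤ ε * log N`,
so this exceeds `N ^ (1 - ε)`. A largest 3-AP-free subset of `{1, …, N}` has `rothNumberNat N`
elements, since `{1, …, N}` is a translate of `range N`.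
-/

open Real Finset

theorem ThreeAPFree.eq_and_eq_of_add_eq_add_self {α : Type*} [AddCancelCommMonoid α]
    {s : Set α} (hs : ThreeAPFree s) {a b c : α} (ha : a ∈ s) (hb : b ∈ s) (hc : c ∈ s)
    (habc : a + b = c + c) : a = b ∧ b = c := by
  obtain rfl := hs ha hc hb habc
  have hba : b = a := add_left_cancel habc
  exact ⟨hba.symm, hba⟩

theorem exists_threeAPFree_subset_Icc_card_eq_rothNumberNat (N : ℕ) :
    ∃ M ⊆ Icc 1 N, #M = rothNumberNat N ∧ ThreeAPFree (M : Set ℕ) := by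
  obtain ⟨M, hM, hcard, hfree⟩ := addRothNumber_spec (Ico 1 (N + 1))
  refine ⟨M, ?_, ?_, hfree⟩
  · rwa [Ico_add_one_right_eq_Icc] at hM
  · rw [hcard, addRothNumber_Ico, Nat.add_sub_cancel]

theorem rpow_one_sub_le_mul_exp_neg_mul_sqrt_log {x ε c : ℝ} (hε : 0 < ε)
    (hx : exp ((c / ε) ^ 2) ≤ x) : x ^ (1 - ε) ≤ x * exp (-c * √(log x)) := by
  have hx0 : 0 < x := (exp_pos _).trans_le hx
  have hlog : (c / ε) ^ 2 ≤ log x := (le_log_iff_exp_le hx0).2 hx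
  have hsqrt : c / ε ≤ √(log x) := le_sqrt_of_sq_le hlog
  have hcε : c * √(log x) ≤ ε * log x :=
    calc c * √(log x) = ε * (c / ε) * √(log x) := by field_simp
      _ ≤ ε * √(log x) * √(log x) := by gcongr
      _ = ε * log x := by rw [mul_assoc, mul_self_sqrt ((sq_nonneg _).trans hlog)]
  calc x ^ (1 - ε) = exp (log x * (1 - ε)) := rpow_def_of_pos hx0 _
    _ ≤ exp (log x + -c * √(log x)) := exp_le_exp.2 (by linarith)
    _ = x * exp (-c * √(log x)) := by rw [exp_add, exp_log hx0]

theorem stmt_17 (ε : ℝ) (hε : 0 < ε) :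
    ∃ N₀ : ℕ, ∀ N : ℕ, N₀ ≤ N →
      ∃ M : Finset ℕ, M ⊆ Finset.Icc 1 N ∧
        (∀ α ∈ M, ∀ β ∈ M, ∀ γ ∈ M, α + β = 2 * γ → α = β ∧ β = γ) ∧
        (N : ℝ) ^ (1 - ε) ≤ M.card := by
  refine ⟨⌈exp ((4 / ε) ^ 2)⌉₊, fun N hN => ?_⟩
  obtain ⟨M, hMN, hcard, hfree⟩ := exists_threeAPFree_subset_Icc_card_eq_rothNumberNat N
  refine ⟨M, hMN, fun α hα β hβ γ hγ h =>
    hfree.eq_and_eq_of_add_eq_add_self hα hβ hγ (by omega), ?_⟩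
  rw [hcard]
  calc (N : ℝ) ^ (1 - ε) ≤ N * exp (-4 * √(log N)) :=
        rpow_one_sub_le_mul_exp_neg_mul_sqrt_log hε (Nat.ceil_le.1 hN)
    _ ≤ rothNumberNat N := Behrend.roth_lower_bound
end
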